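/- arXiv:2304.07624 — 3 statements merged into one kernel-verified Lean document; each statement's English description precedes it below -/
import Mathlib

section
/- Let X, Y be finite sets of ordinals of the same cardinality, F and G construction schemes (of the same type) over X and Y respectively, and h : X → Y the unique increasing bijection. Then G = {h[F] | F ∈ F}. -/
open Set

/-- A *type* for construction schemes: a sequence `(m_k, n_{k+1}, r_{k+1})`. -/
structure CSType where
  m : ℕ → ℕ
  n : ℕ → ℕ
  r : ℕ → ℕ
  m_zero : m 0 = 1
  n_ge : ∀ k, 1 ≤ k → 2 ≤ n k
  r_inf : ∀ j N, ∃ k, N ≤ k ∧ 1 ≤ k ∧ r k = j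
  r_lt : ∀ k, r (k + 1) < m k
  m_rec : ∀ k, m (k + 1) = r (k + 1) + (m k - r (k + 1)) * n (k + 1)

/-- `C` is an initial segment of `A` (written `C ⊑ A` in the paper). -/
def InitSeg (C A : Finset Ordinal) : Prop :=
  C ⊆ A ∧ ∀ c ∈ C, ∀ d ∈ A, d ≤ c → d ∈ C

/-- `D` (with root `R`) is the canonical decomposition of `F`, an element of rank `k+1`,
into `n_{k+1}` elements of rank `k` forming a Δ-system with root `R` of size `r_{k+1}`,
with `R < D 0 \ R < ⋯ < D (n_{k+1} - 1) \ R`. -/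
def CanonDecomp (τ : CSType) (𝓕 : Set (Finset Ordinal)) (k : ℕ)
    (F : Finset Ordinal) (D : Fin (τ.n (k + 1)) → Finset Ordinal)
    (R : Finset Ordinal) : Prop :=
  (∀ i, D i ∈ 𝓕 ∧ (D i).card = τ.m k) ∧
  (∀ x, x ∈ F ↔ ∃ i, x ∈ D i) ∧
  R.card = τ.r (k + 1) ∧
  (∀ i j, i ≠ j → D i ∩ D j = R) ∧
  (∀ a ∈ R, ∀ i, ∀ b ∈ D i, b ∉ R → a < b) ∧
  (∀ i j : Fin (τ.n (k + 1)), i < j → ∀ b ∈ D i, b ∉ R → ∀ c ∈ D j, c ∉ R → b < c)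

/-- `𝓕` is a construction scheme over the set of ordinals `X` of type `τ`.
Rank is measured by cardinality: an element of rank `k` has cardinality `m_k`. -/
structure IsConstructionScheme (τ : CSType) (X : Set Ordinal)
    (𝓕 : Set (Finset Ordinal)) : Prop where
  subset_X : ∀ F ∈ 𝓕, (F : Set Ordinal) ⊆ X
  card_mem : ∀ F ∈ 𝓕, ∃ k, F.card = τ.m k
  cofinal : ∀ A : Finset Ordinal, (A : Set Ordinal) ⊆ X → ∃ F ∈ 𝓕, A ⊆ F
  initSeg : ∀ k, ∀ E ∈ 𝓕, ∀ F ∈ 𝓕, E.card = τ.m k → F.card = τ.m k →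
    InitSeg (E ∩ F) E
  decomp : ∀ k, ∀ F ∈ 𝓕, F.card = τ.m (k + 1) →
    ∃! D : Fin (τ.n (k + 1)) → Finset Ordinal, ∃ R, CanonDecomp τ 𝓕 k F D R

/-- `ρ(α,β)`: the least `k` such that some element of `𝓕` of rank `k` contains both. -/
noncomputable def csRho (τ : CSType) (𝓕 : Set (Finset Ordinal)) (α β : Ordinal) : ℕ :=
  sInf {k | ∃ F ∈ 𝓕, F.card = τ.m k ∧ α ∈ F ∧ β ∈ F}

/-- The `k`-closure `(β)_k = {α ≤ β | ρ(α,β) ≤ k}` (within `X`). -/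
def csClos (τ : CSType) (𝓕 : Set (Finset Ordinal)) (X : Set Ordinal)
    (k : ℕ) (β : Ordinal) : Set Ordinal :=
  {α ∈ X | α ≤ β ∧ csRho τ 𝓕 α β ≤ k}

/-- `Δ(α,β) = min({k | |(α)_k| ≠ |(β)_k|} ∪ {ω})`, valued in `ℕ∞` (where `⊤` plays
the role of `ω`). -/
noncomputable def csDelta (τ : CSType) (𝓕 : Set (Finset Ordinal)) (X : Set Ordinal)
    (α β : Ordinal) : ℕ∞ :=
  sInf ((fun k : ℕ => (k : ℕ∞)) ''
    {k | (csClos τ 𝓕 X k α).ncard ≠ (csClos τ 𝓕 X k β).ncard})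

/-- The function `Ξ_α : ω → ω ∪ {-1}` associated to a construction scheme. -/
noncomputable def csXi (τ : CSType) (𝓕 : Set (Finset Ordinal)) (X : Set Ordinal)
    (α : Ordinal) (k : ℕ) : ℤ :=
  if k = 0 then 0
  else if (csClos τ 𝓕 X k α).ncard ≤ τ.r k then -1
  else (((csClos τ 𝓕 X k α).ncard : ℤ) - ((csClos τ 𝓕 X (k - 1) α).ncard : ℤ)) /
    ((τ.m (k - 1) : ℤ) - (τ.r k : ℤ))

/-- `F` (of rank `k+1`) captures the pair `{α, β}`: with canonical decomposition
`D` and root `R`, `α ∈ D 0 \ R`, `β ∈ D 1 \ R`, and the increasing bijection from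
`D 0` to `D 1` sends `α` to `β`. -/
def CapturesPair (τ : CSType) (𝓕 : Set (Finset Ordinal)) (k : ℕ)
    (F : Finset Ordinal) (α β : Ordinal) : Prop :=
  F ∈ 𝓕 ∧ F.card = τ.m (k + 1) ∧
  ∃ D R, CanonDecomp τ 𝓕 k F D R ∧
    ∃ (h0 : 0 < τ.n (k + 1)) (h1 : 1 < τ.n (k + 1)),
      α ∈ D ⟨0, h0⟩ ∧ α ∉ R ∧ β ∈ D ⟨1, h1⟩ ∧ β ∉ R ∧
      ((D ⟨0, h0⟩ : Set Ordinal) ∩ Set.Iic α).ncard =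
        ((D ⟨1, h1⟩ : Set Ordinal) ∩ Set.Iic β).ncard

/-- `𝓕` is 2-capturing: for every uncountable `S ⊆ X` and every `k₀` there are a pair
`{α, β} ∈ [S]²` and `F ∈ 𝓕` of rank `l > k₀` capturing it. -/
def TwoCapturing (τ : CSType) (X : Set Ordinal) (𝓕 : Set (Finset Ordinal)) : Prop :=
  ∀ S : Set Ordinal, S ⊆ X → ¬ S.Countable → ∀ k₀ : ℕ,
    ∃ k, k₀ ≤ k ∧ ∃ F α β, α ∈ S ∧ β ∈ S ∧ α < β ∧ CapturesPair τ 𝓕 k F α β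


/-! The canonical decomposition of a finite set of ordinals is determined by the set and its
order alone: the root is its initial segment of size `r_{k+1}`, and the blocks without the root
are consecutive intervals of equal size. Hence a construction scheme over a finite `X` is
determined by `X`: it contains `X`, and every element of rank `k` below the top is a block of the
canonical decomposition of an element of rank `k + 1`, so by downward induction on the rank any
two schemes over `X` coincide. An increasing bijection `X → Y` transports a scheme over `X` to
one over `Y`, which must therefore be `𝓖`. -/

namespace CSType

variable (τ : CSType)

theorem two_le_n_succ (k : ℕ) : 2 ≤ τ.n (k + 1) :=
  τ.n_ge (k + 1) k.succ_pos

theorem m_lt_m_succ (k : ℕ) : τ.m k < τ.m (k + 1) := by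
  have hr := τ.r_lt k
  have hn : (τ.m k - τ.r (k + 1)) * 2 ≤ (τ.m k - τ.r (k + 1)) * τ.n (k + 1) :=
    Nat.mul_le_mul_left _ (τ.two_le_n_succ k)
  have := τ.m_rec k
  omega

theorem m_strictMono : StrictMono τ.m :=
  strictMono_nat_of_lt_succ τ.m_lt_m_succ

theorem one_le_m (k : ℕ) : 1 ≤ τ.m k :=
  τ.m_zero ▸ τ.m_strictMono.monotone k.zero_le

end CSType

theorem Finset.exists_mem_notMem_of_card_eq_of_ne {α : Type*} {s t : Finset α}
    (hc : s.card = t.card) (hne : s ≠ t) : ∃ a ∈ s, a ∉ t :=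
  Finset.not_subset.mp fun hst => hne (Finset.eq_of_subset_of_card_le hst hc.ge)

section LinearOrder

variable {α : Type*} [LinearOrder α]

theorem eq_of_card_eq_of_forall_lt_sdiff {F R R' : Finset α} (hR : R ⊆ F) (hR' : R' ⊆ F)
    (hc : R.card = R'.card) (hlt : ∀ a ∈ R, ∀ b ∈ F \ R, a < b)
    (hlt' : ∀ a ∈ R', ∀ b ∈ F \ R', a < b) : R = R' := by
  by_contra hne
  obtain ⟨a, ha, ha'⟩ := Finset.exists_mem_notMem_of_card_eq_of_ne hc hne
  obtain ⟨b, hb', hb⟩ := Finset.exists_mem_notMem_of_card_eq_of_ne hc.symm (Ne.symm hne)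
  exact lt_asymm (hlt a ha b (Finset.mem_sdiff.mpr ⟨hR' hb', hb⟩))
    (hlt' b hb' a (Finset.mem_sdiff.mpr ⟨hR ha, ha'⟩))

variable {ι : Type*} [LinearOrder ι]

theorem exists_gt_mem_of_mem_of_notMem {B B' : ι → Finset α} {i : ι}
    (heq : ∀ j < i, B j = B' j) (hcov : ∀ x, (∃ j, x ∈ B j) → ∃ j, x ∈ B' j)
    (hlt : ∀ j l, j < l → ∀ b ∈ B j, ∀ c ∈ B l, b < c) {a : α} (ha : a ∈ B i)
    (ha' : a ∉ B' i) : ∃ j, i < j ∧ a ∈ B' j := by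
  obtain ⟨j, hj⟩ := hcov a ⟨i, ha⟩
  refine ⟨j, lt_of_le_of_ne (le_of_not_gt fun hji => ?_) (by rintro rfl; exact ha' hj), hj⟩
  exact lt_irrefl a (hlt j i hji a (heq j hji ▸ hj) a ha)

theorem eq_of_ordered_blocks [WellFoundedLT ι] {B B' : ι → Finset α}
    (hcov : ∀ x, (∃ i, x ∈ B i) ↔ ∃ i, x ∈ B' i) (hcard : ∀ i, (B i).card = (B' i).card)
    (hlt : ∀ i j, i < j → ∀ b ∈ B i, ∀ c ∈ B j, b < c)
    (hlt' : ∀ i j, i < j → ∀ b ∈ B' i, ∀ c ∈ B' j, b < c) : B = B' := by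
  funext i
  induction i using WellFoundedLT.induction with
  | _ i ih =>
    by_contra hne
    obtain ⟨a, ha, ha'⟩ := Finset.exists_mem_notMem_of_card_eq_of_ne (hcard i) hne
    obtain ⟨b, hb', hb⟩ :=
      Finset.exists_mem_notMem_of_card_eq_of_ne (hcard i).symm (Ne.symm hne)
    obtain ⟨j, hij, haj⟩ :=
      exists_gt_mem_of_mem_of_notMem ih (fun x => (hcov x).mp) hlt ha ha'
    obtain ⟨l, hil, hbl⟩ := exists_gt_mem_of_mem_of_notMem (fun j hj => (ih j hj).symm)
      (fun x => (hcov x).mpr) hlt' hb' hb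
    exact lt_asymm (hlt' i j hij b hb' a haj) (hlt i l hil a ha b hbl)

end LinearOrder

namespace CanonDecomp

variable {τ : CSType} {𝓕 : Set (Finset Ordinal)} {k : ℕ} {F R : Finset Ordinal}
  {D : Fin (τ.n (k + 1)) → Finset Ordinal}

theorem block_subset (hd : CanonDecomp τ 𝓕 k F D R) (i : Fin (τ.n (k + 1))) : D i ⊆ F :=
  fun _ hx => (hd.2.1 _).mpr ⟨i, hx⟩

theorem root_subset_block (hd : CanonDecomp τ 𝓕 k F D R) (i : Fin (τ.n (k + 1))) : R ⊆ D i := by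
  have := Fin.nontrivial_iff_two_le.mpr (τ.two_le_n_succ k)
  obtain ⟨j, hji⟩ := exists_ne i
  exact hd.2.2.2.1 i j hji.symm ▸ Finset.inter_subset_left

theorem root_subset (hd : CanonDecomp τ 𝓕 k F D R) : R ⊆ F :=
  (hd.root_subset_block ⟨0, by have := τ.two_le_n_succ k; omega⟩).trans (hd.block_subset _)

theorem lt_of_mem_root (hd : CanonDecomp τ 𝓕 k F D R) {a b : Ordinal} (ha : a ∈ R)
    (hb : b ∈ F \ R) : a < b := by
  obtain ⟨hbF, hbR⟩ := Finset.mem_sdiff.mp hb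
  obtain ⟨i, hbi⟩ := (hd.2.1 b).mp hbF
  exact hd.2.2.2.2.1 a ha i b hbi hbR

theorem lt_of_mem_block (hd : CanonDecomp τ 𝓕 k F D R) {i j : Fin (τ.n (k + 1))} (hij : i < j)
    {b c : Ordinal} (hb : b ∈ D i \ R) (hc : c ∈ D j \ R) : b < c :=
  hd.2.2.2.2.2 i j hij b (Finset.mem_sdiff.mp hb).1 (Finset.mem_sdiff.mp hb).2
    c (Finset.mem_sdiff.mp hc).1 (Finset.mem_sdiff.mp hc).2

theorem unique {𝓕' : Set (Finset Ordinal)} {D' : Fin (τ.n (k + 1)) → Finset Ordinal}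
    {R' : Finset Ordinal} (hd : CanonDecomp τ 𝓕 k F D R) (hd' : CanonDecomp τ 𝓕' k F D' R') :
    D = D' := by
  obtain rfl : R = R' := eq_of_card_eq_of_forall_lt_sdiff hd.root_subset
    hd'.root_subset (hd.2.2.1.trans hd'.2.2.1.symm) (fun _ ha _ => hd.lt_of_mem_root ha)
    (fun _ ha _ => hd'.lt_of_mem_root ha)
  have blocks : (fun i => D i \ R) = fun i => D' i \ R := by
    refine eq_of_ordered_blocks (fun x => ?_) (fun i => ?_)
      (fun i j hij b hb c hc => hd.lt_of_mem_block hij hb hc)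
      (fun i j hij b hb c hc => hd'.lt_of_mem_block hij hb hc)
    · simp only [Finset.mem_sdiff, exists_and_right, ← hd.2.1, ← hd'.2.1]
    · rw [Finset.card_sdiff_of_subset (hd.root_subset_block i),
        Finset.card_sdiff_of_subset (hd'.root_subset_block i), (hd.1 i).2, (hd'.1 i).2]
  funext i
  rw [← Finset.sdiff_union_of_subset (hd.root_subset_block i),
    ← Finset.sdiff_union_of_subset (hd'.root_subset_block i), congrFun blocks i]

end CanonDecomp

namespace IsConstructionScheme

variable {τ : CSType} {𝓕 : Set (Finset Ordinal)}

theorem self_mem {X : Finset Ordinal} (hF : IsConstructionScheme τ X 𝓕) : X ∈ 𝓕 := by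
  obtain ⟨F, hF𝓕, hXF⟩ := hF.cofinal X subset_rfl
  rwa [(Finset.coe_subset.mp (hF.subset_X F hF𝓕)).antisymm hXF] at hF𝓕

theorem exists_mem_card_eq_of_le {X : Set Ordinal} (hF : IsConstructionScheme τ X 𝓕)
    {k : ℕ} {G : Finset Ordinal} (hG : G ∈ 𝓕) (hc : G.card = τ.m k) {x : Ordinal}
    (hx : x ∈ G) {j : ℕ} (hj : j ≤ k) : ∃ G' ∈ 𝓕, G'.card = τ.m j ∧ x ∈ G' := by
  induction k generalizing G with
  | zero => exact ⟨G, hG, Nat.le_zero.mp hj ▸ hc, hx⟩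
  | succ k ih =>
    rcases hj.lt_or_eq with hj | rfl
    · obtain ⟨D, R, hd⟩ := (hF.decomp k G hG hc).exists
      obtain ⟨i, hxi⟩ := (hd.2.1 x).mp hx
      exact ih (hd.1 i).1 (hd.1 i).2 hxi (Nat.lt_succ_iff.mp hj)
    · exact ⟨G, hG, hc, hx⟩

theorem exists_canonDecomp_eq {X : Finset Ordinal} (hF : IsConstructionScheme τ X 𝓕)
    {E : Finset Ordinal} (hE : E ∈ 𝓕) {k k₀ : ℕ} (hc : E.card = τ.m k)
    (hX : X.card = τ.m k₀) (hk : k < k₀) :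
    ∃ G ∈ 𝓕, G.card = τ.m (k + 1) ∧ ∃ D R, CanonDecomp τ 𝓕 k G D R ∧ ∃ i, D i = E := by
  have hne : E.Nonempty := Finset.card_pos.mp (hc ▸ τ.one_le_m k)
  have hmax : E.max' hne ∈ X := hF.subset_X E hE (E.max'_mem hne)
  obtain ⟨G, hG, hGc, hmaxG⟩ := hF.exists_mem_card_eq_of_le hF.self_mem hX hmax hk
  obtain ⟨D, R, hd⟩ := (hF.decomp k G hG hGc).exists
  obtain ⟨i, hmaxD⟩ := (hd.2.1 _).mp hmaxG
  -- `E ∩ D i` is an initial segment of `E` containing its maximum, so `E ⊆ D i`.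
  have hseg := hF.initSeg k E hE (D i) (hd.1 i).1 hc (hd.1 i).2
  have hED : E ⊆ D i := fun b hb =>
    (Finset.mem_inter.mp (hseg.2 _ (Finset.mem_inter.mpr ⟨E.max'_mem hne, hmaxD⟩) b hb
      (E.le_max' b hb))).2
  exact ⟨G, hG, hGc, D, R, hd, i,
    (Finset.eq_of_subset_of_card_le hED ((hd.1 i).2.trans hc.symm).le).symm⟩

theorem subset_of_finset {X : Finset Ordinal} {𝓕' : Set (Finset Ordinal)}
    (hF : IsConstructionScheme τ X 𝓕) (hF' : IsConstructionScheme τ X 𝓕') : 𝓕 ⊆ 𝓕' := by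
  obtain ⟨k₀, hk₀⟩ := hF.card_mem X hF.self_mem
  have rank_le : ∀ k ≤ k₀, ∀ E ∈ 𝓕, E.card = τ.m k → E ∈ 𝓕' := by
    intro k hk
    induction hk using Nat.decreasingInduction with
    | self =>
      intro E hE hc
      rw [Finset.eq_of_subset_of_card_le (Finset.coe_subset.mp (hF.subset_X E hE))
        (hk₀.trans hc.symm).le]
      exact hF'.self_mem
    | of_succ k hk ih =>
      intro E hE hc
      obtain ⟨G, hG, hGc, D, R, hd, i, rfl⟩ := hF.exists_canonDecomp_eq hE hc hk₀ hk
      obtain ⟨D', R', hd'⟩ := (hF'.decomp k G (ih G hG hGc) hGc).exists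
      exact hd.unique hd' ▸ (hd'.1 i).1
  intro E hE
  obtain ⟨k, hk⟩ := hF.card_mem E hE
  refine rank_le k (τ.m_strictMono.le_iff_le.mp ?_) E hE hk
  rw [← hk, ← hk₀]
  exact Finset.card_le_card (Finset.coe_subset.mp (hF.subset_X E hE))

theorem eq_of_finset {X : Finset Ordinal} {𝓕' : Set (Finset Ordinal)}
    (hF : IsConstructionScheme τ X 𝓕) (hF' : IsConstructionScheme τ X 𝓕') : 𝓕 = 𝓕' :=
  (hF.subset_of_finset hF').antisymm (hF'.subset_of_finset hF)

end IsConstructionScheme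

section Image

variable {s : Set Ordinal} {h : Ordinal → Ordinal}

theorem InitSeg.image {C A : Finset Ordinal} (hC : InitSeg C A) (hA : (A : Set Ordinal) ⊆ s)
    (hh : StrictMonoOn h s) : InitSeg (C.image h) (A.image h) := by
  refine ⟨Finset.image_subset_image hC.1, ?_⟩
  simp only [Finset.mem_image]
  rintro _ ⟨c, hc, rfl⟩ _ ⟨d, hd, rfl⟩ hdc
  exact ⟨d, hC.2 c hc d hd ((hh.le_iff_le (hA hd) (hA (hC.1 hc))).mp hdc), rfl⟩

theorem CanonDecomp.image {τ : CSType} {𝓕 : Set (Finset Ordinal)} {k : ℕ}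
    {F R : Finset Ordinal} {D : Fin (τ.n (k + 1)) → Finset Ordinal}
    (hd : CanonDecomp τ 𝓕 k F D R) (hF : (F : Set Ordinal) ⊆ s) (hh : StrictMonoOn h s) :
    CanonDecomp τ (Finset.image h '' 𝓕) k (F.image h) (fun i => (D i).image h) (R.image h) := by
  have hinj : Set.InjOn h F := hh.injOn.mono hF
  have hDF i : (D i : Set Ordinal) ⊆ F := Finset.coe_subset.mpr (hd.block_subset i)
  have hRF : (R : Set Ordinal) ⊆ F := Finset.coe_subset.mpr hd.root_subset
  have not_mem_root {b : Ordinal} (hb : h b ∉ R.image h) : b ∉ R :=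
    fun hbR => hb (Finset.mem_image_of_mem h hbR)
  refine ⟨fun i => ⟨⟨D i, (hd.1 i).1, rfl⟩, ?_⟩, fun x => ?_, ?_, fun i j hij => ?_, ?_, ?_⟩
  · rw [Finset.card_image_of_injOn (hinj.mono (hDF i)), (hd.1 i).2]
  · simp only [Finset.mem_image, hd.2.1]
    exact ⟨fun ⟨a, ⟨i, ha⟩, hx⟩ => ⟨i, a, ha, hx⟩, fun ⟨i, a, ha, hx⟩ => ⟨a, ⟨i, ha⟩, hx⟩⟩
  · rw [Finset.card_image_of_injOn (hinj.mono hRF), hd.2.2.1]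
  · rw [← Finset.image_inter_of_injOn _ _ (hinj.mono (Set.union_subset (hDF i) (hDF j))),
      hd.2.2.2.1 i j hij]
  · simp only [Finset.forall_mem_image]
    intro a ha i b hb hbR
    have hbF := hd.block_subset i hb
    exact hh (hF (hRF ha)) (hF hbF)
      (hd.lt_of_mem_root ha (Finset.mem_sdiff.mpr ⟨hbF, not_mem_root hbR⟩))
  · simp only [Finset.forall_mem_image]
    intro i j hij b hb hbR c hc hcR
    exact hh (hF (hDF i hb)) (hF (hDF j hc)) (hd.lt_of_mem_block hij
      (Finset.mem_sdiff.mpr ⟨hb, not_mem_root hbR⟩) (Finset.mem_sdiff.mpr ⟨hc, not_mem_root hcR⟩))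

theorem IsConstructionScheme.image {τ : CSType} {𝓕 : Set (Finset Ordinal)} {t : Set Ordinal}
    (hF : IsConstructionScheme τ s 𝓕) (hbij : Set.BijOn h s t) (hh : StrictMonoOn h s) :
    IsConstructionScheme τ t (Finset.image h '' 𝓕) := by
  have card_image {E : Finset Ordinal} (hE : E ∈ 𝓕) : (E.image h).card = E.card :=
    Finset.card_image_of_injOn (hh.injOn.mono (hF.subset_X E hE))
  constructor
  · rintro _ ⟨F, hF𝓕, rfl⟩
    rw [Finset.coe_image]
    exact (Set.image_mono (hF.subset_X F hF𝓕)).trans hbij.mapsTo.image_subset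
  · rintro _ ⟨F, hF𝓕, rfl⟩
    exact card_image hF𝓕 ▸ hF.card_mem F hF𝓕
  · intro A hA
    obtain ⟨F, hF𝓕, hF⟩ := hF.cofinal (A.image (Function.invFunOn h s)) (by
      simp only [Finset.coe_image, Set.image_subset_iff]
      exact fun a ha => Function.invFunOn_mem (hbij.surjOn (hA ha)))
    exact ⟨F.image h, ⟨F, hF𝓕, rfl⟩, fun a ha => Finset.mem_image.mpr
      ⟨_, hF (Finset.mem_image_of_mem _ ha), Function.invFunOn_eq (hbij.surjOn (hA ha))⟩⟩
  · rintro k _ ⟨E, hE, rfl⟩ _ ⟨F, hF𝓕, rfl⟩ hEc hFc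
    rw [card_image hE] at hEc
    rw [card_image hF𝓕] at hFc
    rw [← Finset.image_inter_of_injOn _ _
      (hh.injOn.mono (Set.union_subset (hF.subset_X E hE) (hF.subset_X F hF𝓕)))]
    exact (hF.initSeg k E hE F hF𝓕 hEc hFc).image (hF.subset_X E hE) hh
  · rintro k _ ⟨F, hF𝓕, rfl⟩ hc
    rw [card_image hF𝓕] at hc
    obtain ⟨D, R, hd⟩ := (hF.decomp k F hF𝓕 hc).exists
    have hdh := hd.image (hF.subset_X F hF𝓕) hh
    exact ⟨_, ⟨_, hdh⟩, fun D' ⟨_, hd'⟩ => hd'.unique hdh⟩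

end Image

theorem stmt5_general (τ : CSType) (X Y : Finset Ordinal)
    (𝓕 𝓖 : Set (Finset Ordinal))
    (hF : IsConstructionScheme τ (X : Set Ordinal) 𝓕)
    (hG : IsConstructionScheme τ (Y : Set Ordinal) 𝓖)
    (h : Ordinal → Ordinal) (hbij : Set.BijOn h (X : Set Ordinal) (Y : Set Ordinal))
    (hmono : ∀ a ∈ X, ∀ b ∈ X, a < b → h a < h b) :
    𝓖 = {G | ∃ F ∈ 𝓕, G = F.image h} := by
  have himage : {G | ∃ F ∈ 𝓕, G = F.image h} = Finset.image h '' 𝓕 := by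
    ext G
    simp only [Set.mem_ofPred_eq, Set.mem_image, eq_comm]
  rw [himage]
  exact hG.eq_of_finset (hF.image hbij fun a ha b hb => hmono a ha b hb)

/-- If `X, Y` are finite sets of ordinals of the same cardinality with
construction schemes `𝓕, 𝓖` of the same type, and `h` is the unique increasing
bijection from `X` to `Y`, then `𝓖 = {h[F] | F ∈ 𝓕}`. -/
theorem stmt5 (τ : CSType) (X Y : Finset Ordinal) (hcard : X.card = Y.card)
    (𝓕 𝓖 : Set (Finset Ordinal))
    (hF : IsConstructionScheme τ (X : Set Ordinal) 𝓕)
    (hG : IsConstructionScheme τ (Y : Set Ordinal) 𝓖)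
    (h : Ordinal → Ordinal) (hbij : Set.BijOn h (X : Set Ordinal) (Y : Set Ordinal))
    (hmono : ∀ a ∈ X, ∀ b ∈ X, a < b → h a < h b) :
    𝓖 = {G | ∃ F ∈ 𝓕, G = F.image h} :=
  stmt5_general τ X Y 𝓕 𝓖 hF hG h hbij hmono
end

section
/- Let F be a construction scheme over X and define the Ξ-function: Ξ_α(k) = 0 if k = 0; Ξ_α(k) = −1 if k > 0 and |(α)_k| ≤ r_k; and Ξ_α(k) = (|(α)_k| − |(α)_{k−1}|)/(m_{k−1} − r_k) otherwise. Let α ∈ X, k ≥ 1, F ∈ F of rank k with α ∈ F, and {F_i}_{i<n_k} the canonical decomposition of F. Then: (a) Ξ_α(k) = −1 if and only if α ∈ R(F); (b) if i < n_k is such that α ∈ F_i ∖ R(F), then Ξ_α(k) = i. -/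
open Set

lemma csType_m_lt_succ (τ : CSType) (k : ℕ) : τ.m k < τ.m (k + 1) := by
  have h1 := τ.r_lt k
  have h2 := τ.m_rec k
  have h3 := τ.n_ge (k + 1) (by omega)
  have h4 : (τ.m k - τ.r (k + 1)) * 2 ≤ (τ.m k - τ.r (k + 1)) * τ.n (k + 1) :=
    Nat.mul_le_mul_left _ h3
  omega

lemma csSameRank (τ : CSType) (X : Set Ordinal) (𝓕 : Set (Finset Ordinal))
    (hCS : IsConstructionScheme τ X 𝓕) (j : ℕ) (E F : Finset Ordinal)
    (hE : E ∈ 𝓕) (hF : F ∈ 𝓕) (hEc : E.card = τ.m j) (hFc : F.card = τ.m j)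
    (α : Ordinal) (hαE : α ∈ E) (hαF : α ∈ F)
    (β : Ordinal) (hβE : β ∈ E) (hβα : β ≤ α) : β ∈ F := by
  have h := hCS.initSeg j E hE F hF hEc hFc
  have hβ := h.2 α (Finset.mem_inter.mpr ⟨hαE, hαF⟩) β hβE hβα
  exact (Finset.mem_inter.mp hβ).2

/-- Coherence: an element of smaller or equal rank containing `α` is, below `α`,
contained in any element of larger rank containing `α`. -/
lemma csCoherence (τ : CSType) (X : Set Ordinal) (𝓕 : Set (Finset Ordinal))
    (hCS : IsConstructionScheme τ X 𝓕) :
    ∀ j, ∀ F ∈ 𝓕, F.card = τ.m j → ∀ j', j' ≤ j → ∀ E ∈ 𝓕, E.card = τ.m j' →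
      ∀ α, α ∈ E → α ∈ F → ∀ β ∈ E, β ≤ α → β ∈ F := by
  intro j
  induction j with
  | zero =>
    intro F hF hFc j' hj' E hE hEc α hαE hαF β hβE hβα
    have hj0 : j' = 0 := Nat.le_zero.mp hj'
    subst hj0
    exact csSameRank τ X 𝓕 hCS 0 E F hE hF hEc hFc α hαE hαF β hβE hβα
  | succ l ih =>
    intro F hF hFc j' hj' E hE hEc α hαE hαF β hβE hβα
    rcases Nat.lt_or_ge j' (l + 1) with h | h
    · obtain ⟨Dd, ⟨Rr, hDd⟩, -⟩ := hCS.decomp l F hF hFc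
      obtain ⟨i, hi⟩ := (hDd.2.1 α).mp hαF
      have hβi : β ∈ Dd i :=
        ih (Dd i) (hDd.1 i).1 (hDd.1 i).2 j' (by omega) E hE hEc α hαE hi β hβE hβα
      exact (hDd.2.1 β).mpr ⟨i, hβi⟩
    · have hj0 : j' = l + 1 := le_antisymm hj' h
      subst hj0
      exact csSameRank τ X 𝓕 hCS (l + 1) E F hE hF hEc hFc α hαE hαF β hβE hβα

/-- The `j`-closure of `α` computed via any rank-`j` element containing `α`. -/
lemma csClos_eq (τ : CSType) (X : Set Ordinal) (𝓕 : Set (Finset Ordinal))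
    (hCS : IsConstructionScheme τ X 𝓕) (j : ℕ) (F : Finset Ordinal)
    (hF : F ∈ 𝓕) (hFc : F.card = τ.m j) (α : Ordinal) (hαF : α ∈ F) :
    csClos τ 𝓕 X j α = {β | β ∈ F ∧ β ≤ α} := by
  ext β
  simp only [csClos, Set.mem_setOf_eq]
  constructor
  · rintro ⟨hβX, hβα, hρ⟩
    have hSne : {k | ∃ G ∈ 𝓕, G.card = τ.m k ∧ β ∈ G ∧ α ∈ G}.Nonempty := by
      obtain ⟨G, hG, hsub⟩ := hCS.cofinal {α, β} (by
        intro x hx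
        simp only [Finset.coe_insert, Finset.coe_singleton, Set.mem_insert_iff,
          Set.mem_singleton_iff] at hx
        rcases hx with rfl | rfl
        · exact hCS.subset_X F hF hαF
        · exact hβX)
      obtain ⟨k', hk'⟩ := hCS.card_mem G hG
      exact ⟨k', G, hG, hk', hsub (by simp), hsub (by simp)⟩
    have hmem := Nat.sInf_mem hSne
    obtain ⟨E, hE, hEc, hβE, hαE⟩ := hmem
    exact ⟨csCoherence τ X 𝓕 hCS j F hF hFc _ hρ E hE hEc α hαE hαF β hβE hβα, hβα⟩
  · rintro ⟨hβF, hβα⟩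
    exact ⟨hCS.subset_X F hF hβF, hβα,
      Nat.sInf_le ⟨F, hF, hFc, hβF, hαF⟩⟩

lemma csClos_ncard (τ : CSType) (X : Set Ordinal) (𝓕 : Set (Finset Ordinal))
    (hCS : IsConstructionScheme τ X 𝓕) (j : ℕ) (F : Finset Ordinal)
    (hF : F ∈ 𝓕) (hFc : F.card = τ.m j) (α : Ordinal) (hαF : α ∈ F) :
    (csClos τ 𝓕 X j α).ncard = (F.filter (fun x => x ≤ α)).card := by
  rw [csClos_eq τ X 𝓕 hCS j F hF hFc α hαF]
  have h : {β | β ∈ F ∧ β ≤ α} = ↑(F.filter (fun x => x ≤ α)) := by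
    ext x; simp
  rw [h, Set.ncard_coe_finset]

/-- For `α ∈ F`, `F ∈ 𝓕` of rank `k+1` with canonical decomposition
`D` and root `R`: (a) `Ξ_α(k+1) = -1` iff `α ∈ R`; (b) if `α ∈ D i \ R` then
`Ξ_α(k+1) = i`. -/
theorem stmt11 (τ : CSType) (X : Set Ordinal) (𝓕 : Set (Finset Ordinal))
    (hCS : IsConstructionScheme τ X 𝓕) (k : ℕ)
    (F : Finset Ordinal) (hF : F ∈ 𝓕) (hFc : F.card = τ.m (k + 1))
    (D : Fin (τ.n (k + 1)) → Finset Ordinal) (R : Finset Ordinal)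
    (hD : CanonDecomp τ 𝓕 k F D R) (α : Ordinal) (hαF : α ∈ F) :
    (csXi τ 𝓕 X α (k + 1) = -1 ↔ α ∈ R) ∧
    (∀ i : Fin (τ.n (k + 1)), α ∈ D i → α ∉ R →
      csXi τ 𝓕 X α (k + 1) = ((i : ℕ) : ℤ)) := by
  classical
  obtain ⟨hD1, hD2, hD3, hD4, hD5, hD6⟩ := hD
  have hn2 : 2 ≤ τ.n (k + 1) := τ.n_ge (k + 1) (by omega)
  have hrm : τ.r (k + 1) < τ.m k := τ.r_lt k
  have hRsub : ∀ i, R ⊆ D i := by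
    intro i
    rcases Nat.lt_or_ge 0 (i : ℕ) with h0 | h0
    · rw [← hD4 i ⟨0, by omega⟩ (by
        intro hc; apply absurd (congrArg Fin.val hc); simp; omega)]
      exact Finset.inter_subset_left
    · rw [← hD4 i ⟨1, by omega⟩ (by
        intro hc; apply absurd (congrArg Fin.val hc); simp; omega)]
      exact Finset.inter_subset_left
  have hclos1 : (csClos τ 𝓕 X (k + 1) α).ncard = (F.filter (fun x => x ≤ α)).card :=
    csClos_ncard τ X 𝓕 hCS (k + 1) F hF hFc α hαF
  -- Part (b)
  have hb : ∀ i : Fin (τ.n (k + 1)), α ∈ D i → α ∉ R →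
      csXi τ 𝓕 X α (k + 1) = ((i : ℕ) : ℤ) := by
    intro i hαDi hαR
    have hclos0 : (csClos τ 𝓕 X k α).ncard = ((D i).filter (fun x => x ≤ α)).card :=
      csClos_ncard τ X 𝓕 hCS k (D i) (hD1 i).1 (hD1 i).2 α hαDi
    set c := (((D i) \ R).filter (fun x => x ≤ α)).card with hc
    have hcpos : 1 ≤ c := by
      apply Finset.card_pos.mpr
      exact ⟨α, Finset.mem_filter.mpr ⟨Finset.mem_sdiff.mpr ⟨hαDi, hαR⟩, le_refl α⟩⟩
    have hBcard : ((D i).filter (fun x => x ≤ α)).card = τ.r (k + 1) + c := by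
      have hBeq : (D i).filter (fun x => x ≤ α) = R ∪ ((D i) \ R).filter (fun x => x ≤ α) := by
        ext x
        simp only [Finset.mem_filter, Finset.mem_union, Finset.mem_sdiff]
        constructor
        · rintro ⟨hxD, hxα⟩
          by_cases hxR : x ∈ R
          · exact Or.inl hxR
          · exact Or.inr ⟨⟨hxD, hxR⟩, hxα⟩
        · rintro (hxR | ⟨⟨hxD, -⟩, hxα⟩)
          · exact ⟨hRsub i hxR, le_of_lt (hD5 x hxR i α hαDi hαR)⟩
          · exact ⟨hxD, hxα⟩
      rw [hBeq, Finset.card_union_of_disjoint, hD3]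
      exact Finset.disjoint_left.mpr (fun x hxR hx =>
        (Finset.mem_sdiff.mp (Finset.mem_filter.mp hx).1).2 hxR)
    have hAcard : (F.filter (fun x => x ≤ α)).card
        = (τ.r (k + 1) + c) + (i : ℕ) * (τ.m k - τ.r (k + 1)) := by
      have hAeq : F.filter (fun x => x ≤ α)
          = ((D i).filter (fun x => x ≤ α)) ∪
            (Finset.univ.filter (fun j : Fin (τ.n (k + 1)) => j < i)).biUnion
              (fun j => D j \ R) := by
        ext x
        simp only [Finset.mem_filter, Finset.mem_union, Finset.mem_biUnion,
          Finset.mem_sdiff, Finset.mem_univ, true_and]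
        constructor
        · rintro ⟨hxF, hxα⟩
          obtain ⟨j, hxj⟩ := (hD2 x).mp hxF
          by_cases hxR : x ∈ R
          · exact Or.inl ⟨hRsub i hxR, hxα⟩
          · rcases lt_trichotomy j i with hji | hji | hji
            · exact Or.inr ⟨j, hji, hxj, hxR⟩
            · subst hji; exact Or.inl ⟨hxj, hxα⟩
            · exact absurd hxα (not_le.mpr (hD6 i j hji α hαDi hαR x hxj hxR))
        · rintro (⟨hxD, hxα⟩ | ⟨j, hji, hxj, hxR⟩)
          · exact ⟨(hD2 x).mpr ⟨i, hxD⟩, hxα⟩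
          · exact ⟨(hD2 x).mpr ⟨j, hxj⟩,
              le_of_lt (hD6 j i hji x hxj hxR α hαDi hαR)⟩
      rw [hAeq, Finset.card_union_of_disjoint, hBcard]
      · congr 1
        rw [Finset.card_biUnion]
        · have hconst : ∀ j : Fin (τ.n (k + 1)), (D j \ R).card = τ.m k - τ.r (k + 1) := by
            intro j
            rw [Finset.card_sdiff_of_subset (hRsub j), (hD1 j).2, hD3]
          rw [Finset.sum_congr rfl (fun j _ => hconst j), Finset.sum_const, smul_eq_mul]
          congr 1
          have : Finset.univ.filter (fun j : Fin (τ.n (k + 1)) => j < i) = Finset.Iio i := by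
            ext j; simp
          rw [this, Fin.card_Iio]
        · intro a _ b _ hab
          refine Finset.disjoint_left.mpr (fun x hxa hxb => ?_)
          have hx1 := Finset.mem_sdiff.mp hxa
          have hx2 := Finset.mem_sdiff.mp hxb
          have : x ∈ D a ∩ D b := Finset.mem_inter.mpr ⟨hx1.1, hx2.1⟩
          rw [hD4 a b hab] at this
          exact hx1.2 this
      · refine Finset.disjoint_left.mpr (fun x hx1 hx2 => ?_)
        obtain ⟨hxD, -⟩ := Finset.mem_filter.mp hx1
        obtain ⟨j, hj, hx2'⟩ := Finset.mem_biUnion.mp hx2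
        obtain ⟨hxDj, hxR⟩ := Finset.mem_sdiff.mp hx2'
        have hji : j ≠ i := ne_of_lt (Finset.mem_filter.mp hj).2
        have : x ∈ D j ∩ D i := Finset.mem_inter.mpr ⟨hxDj, hxD⟩
        rw [hD4 j i hji] at this
        exact hxR this
    simp only [csXi, Nat.add_sub_cancel, Nat.succ_ne_zero, if_false, hclos1, hclos0,
      hAcard, hBcard]
    rw [if_neg (by omega)]
    have hsub : ((τ.m k - τ.r (k + 1) : ℕ) : ℤ) = (τ.m k : ℤ) - (τ.r (k + 1) : ℤ) := by
      exact_mod_cast Nat.cast_sub (le_of_lt hrm)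
    push_cast [Nat.cast_sub (le_of_lt hrm)]
    rw [show ((τ.r (k+1) : ℤ) + c + (i : ℕ) * ((τ.m k : ℤ) - (τ.r (k+1) : ℤ))
        - ((τ.r (k+1) : ℤ) + c)) = ((i : ℕ) : ℤ) * ((τ.m k : ℤ) - (τ.r (k+1) : ℤ)) by ring]
    exact Int.mul_ediv_cancel _ (by omega)
  refine ⟨⟨fun hXi => ?_, fun hαR => ?_⟩, hb⟩
  · by_contra hαR
    obtain ⟨i, hi⟩ := (hD2 α).mp hαF
    have := hb i hi hαR
    rw [hXi] at this
    omega
  · simp only [csXi, Nat.succ_ne_zero, if_false]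
    rw [if_pos]
    rw [hclos1]
    have hsub : F.filter (fun x => x ≤ α) ⊆ R := by
      intro x hx
      obtain ⟨hxF, hxα⟩ := Finset.mem_filter.mp hx
      obtain ⟨j, hxj⟩ := (hD2 x).mp hxF
      by_contra hxR
      exact absurd hxα (not_le.mpr (hD5 α hαR j x hxj hxR))
    calc (F.filter (fun x => x ≤ α)).card ≤ R.card := Finset.card_le_card hsub
      _ = τ.r (k + 1) := hD3
end

section
/- Let F be a construction scheme over X, α < β ∈ X, and k ≥ 1. Then: (a) if k < Δ(α,β), then Ξ_α(k) = Ξ_β(k); (b) if k = ρ(α,β), then 0 ≤ Ξ_α(k) < Ξ_β(k); (c) if k > ρ(α,β), then either Ξ_α(k) = −1 or Ξ_α(k) = Ξ_β(k). -/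
open Set

section Aux

variable {τ : CSType} {X : Set Ordinal} {𝓕 : Set (Finset Ordinal)}

lemma CSType.m_pos (τ : CSType) : ∀ k, 1 ≤ τ.m k := by
  intro k
  induction k with
  | zero => simp [τ.m_zero]
  | succ k ih =>
    have h1 := τ.r_lt k
    have h2 := τ.n_ge (k + 1) (by omega)
    have h3 := τ.m_rec k
    have : 1 ≤ (τ.m k - τ.r (k + 1)) := by omega
    nlinarith

lemma CSType.m_strictMono_s12 (τ : CSType) : StrictMono τ.m := by
  apply strictMono_nat_of_lt_succ
  intro k
  have h1 := τ.r_lt k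
  have h2 := τ.n_ge (k + 1) (by omega)
  have h3 := τ.m_rec k
  have h4 : τ.r (k+1) + (τ.m k - τ.r (k+1)) * 2 ≤ τ.r (k+1) + (τ.m k - τ.r (k+1)) * τ.n (k+1) :=
    by
      have : (τ.m k - τ.r (k+1)) * 2 ≤ (τ.m k - τ.r (k+1)) * τ.n (k+1) :=
        Nat.mul_le_mul_left _ h2
      omega
  omega

/-- Descend to a sub-element of any smaller rank containing a given point. -/
lemma descend (hCS : IsConstructionScheme τ X 𝓕) {γ : Ordinal} :
    ∀ l, ∀ j, j ≤ l → ∀ F ∈ 𝓕, F.card = τ.m l → γ ∈ F →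
      ∃ E ∈ 𝓕, E.card = τ.m j ∧ γ ∈ E ∧ E ⊆ F := by
  intro l
  induction l with
  | zero =>
    intro j hj F hF hcard hγ
    interval_cases j
    exact ⟨F, hF, hcard, hγ, subset_rfl⟩
  | succ l ih =>
    intro j hj F hF hcard hγ
    rcases Nat.eq_or_lt_of_le hj with rfl | hlt
    · exact ⟨F, hF, hcard, hγ, subset_rfl⟩
    · obtain ⟨D, ⟨R, hD⟩, -⟩ := hCS.decomp l F hF hcard
      obtain ⟨i, hi⟩ := (hD.2.1 γ).mp hγ
      obtain ⟨E, hE, hcard', hγ', hsub⟩ :=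
        ih j (by omega) (D i) (hD.1 i).1 (hD.1 i).2 hi
      exact ⟨E, hE, hcard', hγ',
        hsub.trans (fun x hx => (hD.2.1 x).mpr ⟨i, hx⟩)⟩

/-- Coherence: points of a lower-rank element below a common point lie in the
higher-rank element. -/
lemma mem_of_le_mem (hCS : IsConstructionScheme τ X 𝓕) {E F : Finset Ordinal}
    {j l : ℕ} (hjl : j ≤ l) (hE : E ∈ 𝓕) (hEcard : E.card = τ.m j)
    (hF : F ∈ 𝓕) (hFcard : F.card = τ.m l) {γ ξ : Ordinal}
    (hγE : γ ∈ E) (hγF : γ ∈ F) (hξ : ξ ∈ E) (hle : ξ ≤ γ) : ξ ∈ F := by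
  obtain ⟨E', hE', hE'card, hγE', hE'sub⟩ := descend hCS l j hjl F hF hFcard hγF
  have hIS := hCS.initSeg j E hE E' hE' hEcard hE'card
  have hmem : γ ∈ E ∩ E' := Finset.mem_inter.mpr ⟨hγE, hγE'⟩
  have := hIS.2 γ hmem ξ hξ hle
  exact hE'sub (Finset.mem_inter.mp this).2

lemma rho_set_nonempty (hCS : IsConstructionScheme τ X 𝓕) {a b : Ordinal}
    (ha : a ∈ X) (hb : b ∈ X) :
    {k | ∃ F ∈ 𝓕, F.card = τ.m k ∧ a ∈ F ∧ b ∈ F}.Nonempty := by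
  obtain ⟨F, hF, hsub⟩ := hCS.cofinal {a, b} (by
    intro x hx
    simp only [Finset.coe_insert, Finset.coe_singleton, Set.mem_insert_iff,
      Set.mem_singleton_iff] at hx
    rcases hx with rfl | rfl <;> assumption)
  obtain ⟨k, hk⟩ := hCS.card_mem F hF
  exact ⟨k, F, hF, hk, hsub (by simp), hsub (by simp)⟩

lemma rho_spec (hCS : IsConstructionScheme τ X 𝓕) {a b : Ordinal}
    (ha : a ∈ X) (hb : b ∈ X) :
    ∃ F ∈ 𝓕, F.card = τ.m (csRho τ 𝓕 a b) ∧ a ∈ F ∧ b ∈ F :=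
  Nat.sInf_mem (rho_set_nonempty hCS ha hb)

lemma rho_le (hCS : IsConstructionScheme τ X 𝓕) {a b : Ordinal} {F : Finset Ordinal}
    {l : ℕ} (hF : F ∈ 𝓕) (hcard : F.card = τ.m l) (haF : a ∈ F) (hbF : b ∈ F) :
    csRho τ 𝓕 a b ≤ l :=
  Nat.sInf_le ⟨F, hF, hcard, haF, hbF⟩

/-- The `l`-closure of `γ` equals `F ∩ Iic γ` for any `F ∈ 𝓕` of rank `l`
containing `γ`. -/
lemma closure_eq (hCS : IsConstructionScheme τ X 𝓕) {F : Finset Ordinal} {l : ℕ}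
    {γ : Ordinal} (hF : F ∈ 𝓕) (hcard : F.card = τ.m l) (hγ : γ ∈ F) :
    csClos τ 𝓕 X l γ = ↑(F.filter (fun x => x ≤ γ)) := by
  have hγX : γ ∈ X := hCS.subset_X F hF hγ
  ext ξ
  simp only [csClos, Set.mem_setOf_eq, Finset.coe_filter, Finset.mem_filter]
  constructor
  · rintro ⟨hξX, hle, hρ⟩
    obtain ⟨E, hE, hEcard, hξE, hγE⟩ := rho_spec hCS hξX hγX
    exact ⟨mem_of_le_mem hCS hρ hE hEcard hF hcard hγE hγ hξE hle, hle⟩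
  · rintro ⟨hξF, hle⟩
    exact ⟨hCS.subset_X F hF hξF, hle, rho_le hCS hF hcard hξF hγ⟩

/-- Uniformity of existing ranks: if some element of rank `l` exists, every point
of `X` lies in an element of each rank `j ≤ l`. -/
lemma exists_rank (hCS : IsConstructionScheme τ X 𝓕) {F : Finset Ordinal} {l : ℕ}
    (hF : F ∈ 𝓕) (hcard : F.card = τ.m l) {γ : Ordinal} (hγ : γ ∈ X) {j : ℕ}
    (hj : j ≤ l) : ∃ E ∈ 𝓕, E.card = τ.m j ∧ γ ∈ E := by
  obtain ⟨H, hH, hsub⟩ := hCS.cofinal (insert γ F) (by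
    intro x hx
    simp only [Finset.coe_insert, Set.mem_insert_iff] at hx
    rcases hx with rfl | hx
    · exact hγ
    · exact hCS.subset_X F hF hx)
  obtain ⟨l', hl'⟩ := hCS.card_mem H hH
  have hcardle : τ.m l ≤ τ.m l' := by
    rw [← hcard, ← hl']
    exact Finset.card_le_card ((Finset.subset_insert _ _).trans hsub)
  have hll' : l ≤ l' := (τ.m_strictMono_s12.le_iff_le).mp hcardle
  obtain ⟨E, hE, hEcard, hγE, -⟩ :=
    descend hCS l' j (hj.trans hll') H hH hl' (hsub (Finset.mem_insert_self _ _))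
  exact ⟨E, hE, hEcard, hγE⟩

end Aux
section Count

variable {τ : CSType} {X : Set Ordinal} {𝓕 : Set (Finset Ordinal)}

lemma root_subset {n : ℕ} (hn : 2 ≤ n) {D : Fin n → Finset Ordinal} {R : Finset Ordinal}
    (h : ∀ i j : Fin n, i ≠ j → D i ∩ D j = R) (t : Fin n) : R ⊆ D t := by
  have h0 : (0 : ℕ) < n := by omega
  have h1 : (1 : ℕ) < n := by omega
  by_cases ht : t = ⟨0, h0⟩
  · rw [← h t ⟨1, h1⟩ (by simp [ht, Fin.ext_iff])]
    exact Finset.inter_subset_left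
  · rw [← h t ⟨0, h0⟩ (by simpa [Fin.ext_iff] using fun hh => ht (Fin.ext hh))]
    exact Finset.inter_subset_left

lemma card_biUnion_delta {n m r : ℕ} {D : Fin n → Finset Ordinal} {R : Finset Ordinal}
    (hcard : ∀ t, (D t).card = m) (hR : R.card = r)
    (hinter : ∀ t t', t ≠ t' → D t ∩ D t' = R) (hRsub : ∀ t, R ⊆ D t)
    (s : Finset (Fin n)) (hs : s.Nonempty) :
    (s.biUnion D).card = r + s.card * (m - r) := by
  classical
  have hdisj : ∀ t ∈ s, ∀ t' ∈ s, t ≠ t' →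
      Disjoint (D t \ R) (D t' \ R) := by
    intro t _ t' _ hne
    rw [Finset.disjoint_left]
    intro x hx hx'
    have hx1 := Finset.mem_sdiff.mp hx
    have hx2 := Finset.mem_sdiff.mp hx'
    have : x ∈ D t ∩ D t' := Finset.mem_inter.mpr ⟨hx1.1, hx2.1⟩
    rw [hinter t t' hne] at this
    exact hx1.2 this
  have hkey : s.biUnion D = R ∪ s.biUnion (fun t => D t \ R) := by
    ext x
    simp only [Finset.mem_biUnion, Finset.mem_union, Finset.mem_sdiff]
    constructor
    · rintro ⟨t, ht, hx⟩
      by_cases hxR : x ∈ R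
      · exact Or.inl hxR
      · exact Or.inr ⟨t, ht, hx, hxR⟩
    · rintro (hxR | ⟨t, ht, hx, -⟩)
      · exact ⟨hs.choose, hs.choose_spec, hRsub _ hxR⟩
      · exact ⟨t, ht, hx⟩
  have hdisj2 : Disjoint R (s.biUnion (fun t => D t \ R)) := by
    rw [Finset.disjoint_left]
    intro x hx hx'
    obtain ⟨t, -, hx'⟩ := Finset.mem_biUnion.mp hx'
    exact (Finset.mem_sdiff.mp hx').2 hx
  rw [hkey, Finset.card_union_of_disjoint hdisj2, Finset.card_biUnion hdisj, hR]
  congr 1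
  rw [Finset.sum_congr rfl (fun t _ => by
    rw [Finset.card_sdiff_of_subset (hRsub t), hcard t, hR])]
  rw [Finset.sum_const, smul_eq_mul]

lemma filter_univ_lt_card {n : ℕ} (i : Fin n) :
    (Finset.univ.filter (fun t : Fin n => t < i)).card = i.val := by
  have : Finset.univ.filter (fun t : Fin n => t < i) = Finset.Iio i := by
    ext t; simp
  rw [this, Fin.card_Iio]

/-- Main counting lemma: size of `F ∩ Iic γ` when `γ` lies in the `i`-th piece and
is not in the root. -/
lemma count_main {j : ℕ} {F : Finset Ordinal} {D : Fin (τ.n (j + 1)) → Finset Ordinal}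
    {R : Finset Ordinal} (hD : CanonDecomp τ 𝓕 j F D R) (hn : 2 ≤ τ.n (j + 1))
    {i : Fin (τ.n (j + 1))} {γ : Ordinal} (hγ : γ ∈ D i) (hγR : γ ∉ R) :
    (F.filter (fun x => x ≤ γ)).card =
      i.val * (τ.m j - τ.r (j + 1)) + ((D i).filter (fun x => x ≤ γ)).card := by
  classical
  obtain ⟨hD1, hD2, hD3, hD4, hD5, hD6⟩ := hD
  have hRsub : ∀ t, R ⊆ D t := root_subset hn hD4
  have hRlt : ∀ x ∈ R, x < γ := fun x hx => hD5 x hx i γ hγ hγR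
  set A := (Finset.univ.filter (fun t : Fin (τ.n (j + 1)) => t < i)).biUnion D with hA
  set B := (D i).filter (fun x => x ≤ γ) with hB
  have hRB : R ⊆ B := fun x hx =>
    Finset.mem_filter.mpr ⟨hRsub i hx, (hRlt x hx).le⟩
  have hsplit : F.filter (fun x => x ≤ γ) = A ∪ B := by
    ext x
    simp only [Finset.mem_filter, Finset.mem_union, hA, Finset.mem_biUnion,
      Finset.mem_filter, Finset.mem_univ, true_and, hB]
    constructor
    · rintro ⟨hxF, hxle⟩
      obtain ⟨t, hxt⟩ := (hD2 x).mp hxF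
      by_cases hxR : x ∈ R
      · exact Or.inr ⟨hRsub i hxR, hxle⟩
      · rcases lt_trichotomy t i with hti | rfl | hit
        · exact Or.inl ⟨t, hti, hxt⟩
        · exact Or.inr ⟨hxt, hxle⟩
        · exact absurd hxle (not_le.mpr (hD6 i t hit γ hγ hγR x hxt hxR))
    · rintro (⟨t, hti, hxt⟩ | ⟨hxi, hxle⟩)
      · refine ⟨(hD2 x).mpr ⟨t, hxt⟩, ?_⟩
        by_cases hxR : x ∈ R
        · exact (hRlt x hxR).le
        · exact (hD6 t i hti x hxt hxR γ hγ hγR).le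
      · exact ⟨(hD2 x).mpr ⟨i, hxi⟩, hxle⟩
  rcases Nat.eq_zero_or_pos i.val with hi0 | hipos
  · have hAempty : A = ∅ := by
      rw [hA]
      have hf : Finset.univ.filter (fun t : Fin (τ.n (j + 1)) => t < i) = ∅ :=
        Finset.filter_eq_empty_iff.mpr (fun t _ => by
          simp only [Fin.lt_def, hi0]
          omega)
      rw [hf, Finset.biUnion_empty]
    rw [hsplit, hAempty, Finset.empty_union, hi0]
    simp
  · have hi0lt : (⟨0, by omega⟩ : Fin (τ.n (j + 1))) < i := by
      simp [Fin.lt_def, hipos]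
    have hAB : A ∩ B = R := by
      apply Finset.Subset.antisymm
      · intro x hx
        obtain ⟨hxA, hxB⟩ := Finset.mem_inter.mp hx
        obtain ⟨t, ht, hxt⟩ := Finset.mem_biUnion.mp hxA
        have hti : t < i := (Finset.mem_filter.mp ht).2
        have : x ∈ D t ∩ D i :=
          Finset.mem_inter.mpr ⟨hxt, (Finset.mem_filter.mp hxB).1⟩
        rwa [hD4 t i (ne_of_lt hti)] at this
      · intro x hx
        refine Finset.mem_inter.mpr ⟨Finset.mem_biUnion.mpr
          ⟨⟨0, by omega⟩, Finset.mem_filter.mpr ⟨Finset.mem_univ _, hi0lt⟩,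
            hRsub _ hx⟩, hRB hx⟩
    have hsne : (Finset.univ.filter (fun t : Fin (τ.n (j + 1)) => t < i)).Nonempty :=
      ⟨⟨0, by omega⟩, Finset.mem_filter.mpr ⟨Finset.mem_univ _, hi0lt⟩⟩
    have hAcard : A.card = τ.r (j + 1) + i.val * (τ.m j - τ.r (j + 1)) := by
      rw [hA, card_biUnion_delta (fun t => (hD1 t).2) hD3 hD4 hRsub _ hsne,
        filter_univ_lt_card]
    have := Finset.card_union_add_card_inter A B
    rw [hAB, hsplit] at *
    omega

end Count
section Xi

variable {τ : CSType} {X : Set Ordinal} {𝓕 : Set (Finset Ordinal)}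

lemma xi_piece (hCS : IsConstructionScheme τ X 𝓕) {j : ℕ} {F : Finset Ordinal}
    {D : Fin (τ.n (j + 1)) → Finset Ordinal} {R : Finset Ordinal}
    (hF : F ∈ 𝓕) (hFcard : F.card = τ.m (j + 1))
    (hD : CanonDecomp τ 𝓕 j F D R) {i : Fin (τ.n (j + 1))} {γ : Ordinal}
    (hγ : γ ∈ D i) (hγR : γ ∉ R) :
    csXi τ 𝓕 X γ (j + 1) = (i.val : ℤ) := by
  have hn : 2 ≤ τ.n (j + 1) := τ.n_ge (j + 1) (by omega)
  have hγF : γ ∈ F := (hD.2.1 γ).mpr ⟨i, hγ⟩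
  have hc1 : csClos τ 𝓕 X (j + 1) γ = ↑(F.filter (fun x => x ≤ γ)) :=
    closure_eq hCS hF hFcard hγF
  have hc0 : csClos τ 𝓕 X j γ = ↑((D i).filter (fun x => x ≤ γ)) :=
    closure_eq hCS (hD.1 i).1 (hD.1 i).2 hγ
  have hcount := count_main hD hn hγ hγR
  have hrlt : τ.r (j + 1) < τ.m j := τ.r_lt j
  have hRsub : R ⊆ D i := root_subset hn hD.2.2.2.1 i
  have hlb : τ.r (j + 1) + 1 ≤ ((D i).filter (fun x => x ≤ γ)).card := by
    have hsub : insert γ R ⊆ (D i).filter (fun x => x ≤ γ) := by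
      intro x hx
      rcases Finset.mem_insert.mp hx with rfl | hx
      · exact Finset.mem_filter.mpr ⟨hγ, le_rfl⟩
      · exact Finset.mem_filter.mpr ⟨hRsub hx, (hD.2.2.2.2.1 x hx i γ hγ hγR).le⟩
    calc τ.r (j + 1) + 1 = (insert γ R).card := by
          rw [Finset.card_insert_of_notMem hγR, hD.2.2.1]
      _ ≤ _ := Finset.card_le_card hsub
  set b := ((D i).filter (fun x => x ≤ γ)).card with hb
  set d := τ.m j - τ.r (j + 1) with hd
  have hdpos : 0 < d := by omega
  unfold csXi
  rw [if_neg (Nat.succ_ne_zero j)]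
  have hj1 : j + 1 - 1 = j := rfl
  rw [hj1, hc1, hc0, Set.ncard_coe_finset, Set.ncard_coe_finset, hcount]
  rw [if_neg (by omega : ¬ (i.val * d + b ≤ τ.r (j + 1)))]
  have hnum : ((i.val * d + b : ℕ) : ℤ) - (b : ℤ) = (i.val : ℤ) * (d : ℤ) := by
    push_cast; ring
  have hden : ((τ.m j : ℤ) - (τ.r (j + 1) : ℤ)) = (d : ℤ) := by
    rw [hd]; push_cast [Nat.cast_sub hrlt.le]; ring
  rw [hnum, hden]
  exact Int.mul_ediv_cancel _ (by exact_mod_cast hdpos.ne')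

lemma xi_root (hCS : IsConstructionScheme τ X 𝓕) {j : ℕ} {F : Finset Ordinal}
    {D : Fin (τ.n (j + 1)) → Finset Ordinal} {R : Finset Ordinal}
    (hF : F ∈ 𝓕) (hFcard : F.card = τ.m (j + 1))
    (hD : CanonDecomp τ 𝓕 j F D R) {γ : Ordinal} (hγR : γ ∈ R) :
    csXi τ 𝓕 X γ (j + 1) = -1 := by
  have hn : 2 ≤ τ.n (j + 1) := τ.n_ge (j + 1) (by omega)
  have hRsub : ∀ t, R ⊆ D t := root_subset hn hD.2.2.2.1
  have hγF : γ ∈ F := (hD.2.1 γ).mpr ⟨⟨0, by omega⟩, hRsub _ hγR⟩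
  have hc1 : csClos τ 𝓕 X (j + 1) γ = ↑(F.filter (fun x => x ≤ γ)) :=
    closure_eq hCS hF hFcard hγF
  have hsub : F.filter (fun x => x ≤ γ) ⊆ R := by
    intro x hx
    obtain ⟨hxF, hxle⟩ := Finset.mem_filter.mp hx
    obtain ⟨t, hxt⟩ := (hD.2.1 x).mp hxF
    by_contra hxR
    exact absurd hxle (not_le.mpr (hD.2.2.2.2.1 γ hγR t x hxt hxR))
  have hcard : (F.filter (fun x => x ≤ γ)).card ≤ τ.r (j + 1) := by
    rw [← hD.2.2.1]; exact Finset.card_le_card hsub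
  unfold csXi
  rw [if_neg (Nat.succ_ne_zero j), hc1, Set.ncard_coe_finset, if_pos hcard]

/-- Closure stabilizes above the maximal available rank. -/
lemma closure_eq_of_max (hCS : IsConstructionScheme τ X 𝓕) {F : Finset Ordinal}
    {l : ℕ} {γ : Ordinal} (hF : F ∈ 𝓕) (hcard : F.card = τ.m l) (hγ : γ ∈ F)
    {l' : ℕ} (hll' : l ≤ l')
    (hmax : ∀ e, l < e → e ≤ l' → ¬ ∃ E ∈ 𝓕, E.card = τ.m e ∧ γ ∈ E) :
    csClos τ 𝓕 X l' γ = ↑(F.filter (fun x => x ≤ γ)) := by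
  have hγX : γ ∈ X := hCS.subset_X F hF hγ
  ext ξ
  simp only [csClos, Set.mem_setOf_eq, Finset.coe_filter, Finset.mem_filter]
  constructor
  · rintro ⟨hξX, hle, hρ⟩
    obtain ⟨E, hE, hEcard, hξE, hγE⟩ := rho_spec hCS hξX hγX
    have hle' : csRho τ 𝓕 ξ γ ≤ l := by
      by_contra h
      exact hmax _ (not_le.mp h) hρ ⟨E, hE, hEcard, hγE⟩
    exact ⟨mem_of_le_mem hCS hle' hE hEcard hF hcard hγE hγ hξE hle, hle⟩
  · rintro ⟨hξF, hle⟩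
    exact ⟨hCS.subset_X F hF hξF, hle, (rho_le hCS hF hcard hξF hγ).trans hll'⟩

end Xi
/-- For `α < β` in `X` and `k ≥ 1`: (a) if `k < Δ(α,β)` then
`Ξ_α(k) = Ξ_β(k)`; (b) if `k = ρ(α,β)` then `0 ≤ Ξ_α(k) < Ξ_β(k)`; (c) if
`k > ρ(α,β)` then `Ξ_α(k) = -1` or `Ξ_α(k) = Ξ_β(k)`. -/
theorem stmt12 (τ : CSType) (X : Set Ordinal) (𝓕 : Set (Finset Ordinal))
    (hCS : IsConstructionScheme τ X 𝓕) (α β : Ordinal)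
    (hα : α ∈ X) (hβ : β ∈ X) (hlt : α < β) (k : ℕ) (hk : 1 ≤ k) :
    ((k : ℕ∞) < csDelta τ 𝓕 X α β → csXi τ 𝓕 X α k = csXi τ 𝓕 X β k) ∧
    (k = csRho τ 𝓕 α β →
      0 ≤ csXi τ 𝓕 X α k ∧ csXi τ 𝓕 X α k < csXi τ 𝓕 X β k) ∧
    (csRho τ 𝓕 α β < k →
      csXi τ 𝓕 X α k = -1 ∨ csXi τ 𝓕 X α k = csXi τ 𝓕 X β k) := by
  refine ⟨?_, ?_, ?_⟩
  · -- (a)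
    intro hΔ
    have key : ∀ l : ℕ, l ≤ k →
        (csClos τ 𝓕 X l α).ncard = (csClos τ 𝓕 X l β).ncard := by
      intro l hl
      by_contra h
      have hmem : (l : ℕ∞) ∈ ((fun k : ℕ => (k : ℕ∞)) ''
          {k | (csClos τ 𝓕 X k α).ncard ≠ (csClos τ 𝓕 X k β).ncard}) :=
        Set.mem_image_of_mem _ h
      have hle : csDelta τ 𝓕 X α β ≤ (l : ℕ∞) := sInf_le hmem
      exact absurd hΔ (not_lt.mpr (hle.trans (Nat.cast_le.mpr hl)))
    unfold csXi
    rw [key k le_rfl, key (k - 1) (by omega)]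
  · -- (b)
    intro hkρ
    obtain ⟨F, hF, hFcard, hαF, hβF⟩ := rho_spec hCS hα hβ
    rw [← hkρ] at hFcard
    obtain ⟨j, rfl⟩ : ∃ j, k = j + 1 := ⟨k - 1, by omega⟩
    obtain ⟨D, ⟨R, hD⟩, -⟩ := hCS.decomp j F hF hFcard
    have hn : 2 ≤ τ.n (j + 1) := τ.n_ge _ (by omega)
    have hRsub := root_subset hn hD.2.2.2.1
    obtain ⟨iα, hiα⟩ := (hD.2.1 α).mp hαF
    obtain ⟨iβ, hiβ⟩ := (hD.2.1 β).mp hβF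
    have hnotlow : ∀ t : Fin (τ.n (j + 1)), α ∈ D t → β ∈ D t → False := by
      intro t h1 h2
      have := rho_le hCS (hD.1 t).1 (hD.1 t).2 h1 h2
      omega
    have hαR : α ∉ R := fun h => hnotlow iβ (hRsub _ h) hiβ
    have hβR : β ∉ R := fun h => hnotlow iα hiα (hRsub _ h)
    have hne : iα ≠ iβ := fun h => hnotlow iα hiα (h ▸ hiβ)
    have hij : iα < iβ := by
      rcases lt_trichotomy iα iβ with h | h | h
      · exact h
      · exact absurd h hne
      · exact absurd (hD.2.2.2.2.2 iβ iα h β hiβ hβR α hiα hαR) (lt_asymm hlt)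
    rw [xi_piece hCS hF hFcard hD hiα hαR, xi_piece hCS hF hFcard hD hiβ hβR]
    exact ⟨Int.ofNat_nonneg _, by exact_mod_cast (Fin.lt_def.mp hij)⟩
  · -- (c)
    intro hρk
    obtain ⟨E₀, hE₀, hE₀card, hαE₀, hβE₀⟩ := rho_spec hCS hα hβ
    by_cases hex : ∃ F ∈ 𝓕, F.card = τ.m k ∧ β ∈ F
    · obtain ⟨F, hF, hFcard, hβF⟩ := hex
      obtain ⟨j, rfl⟩ : ∃ j, k = j + 1 := ⟨k - 1, by omega⟩
      obtain ⟨D, ⟨R, hD⟩, -⟩ := hCS.decomp j F hF hFcard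
      obtain ⟨iβ, hiβ⟩ := (hD.2.1 β).mp hβF
      have hαD : α ∈ D iβ :=
        mem_of_le_mem hCS (by omega : csRho τ 𝓕 α β ≤ j) hE₀ hE₀card
          (hD.1 iβ).1 (hD.1 iβ).2 hβE₀ hiβ hαE₀ hlt.le
      by_cases hαR : α ∈ R
      · exact Or.inl (xi_root hCS hF hFcard hD hαR)
      · have hβR : β ∉ R := fun h =>
          absurd (hD.2.2.2.2.1 β h iβ α hαD hαR) (lt_asymm hlt)
        exact Or.inr (by
          rw [xi_piece hCS hF hFcard hD hαD hαR, xi_piece hCS hF hFcard hD hiβ hβR])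
    · classical
      set P : ℕ → Prop := fun e => ∃ F ∈ 𝓕, F.card = τ.m e ∧ β ∈ F with hP
      have hPρ : P (csRho τ 𝓕 α β) := ⟨E₀, hE₀, hE₀card, hβE₀⟩
      have hlP : P (Nat.findGreatest P k) := Nat.findGreatest_spec (le_of_lt hρk) hPρ
      set l := Nat.findGreatest P k with hl
      have hlk : l ≤ k := Nat.findGreatest_le k
      have hρl : csRho τ 𝓕 α β ≤ l := Nat.le_findGreatest (le_of_lt hρk) hPρ
      have hlne : l ≠ k := fun h => hex (h ▸ hlP)
      obtain ⟨Fm, hFm, hFmcard, hβFm⟩ := hlP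
      have hαFm : α ∈ Fm :=
        mem_of_le_mem hCS hρl hE₀ hE₀card hFm hFmcard hβE₀ hβFm hαE₀ hlt.le
      have hmaxβ : ∀ e, l < e → e ≤ k → ¬ ∃ E ∈ 𝓕, E.card = τ.m e ∧ β ∈ E :=
        fun e he hek h => Nat.findGreatest_is_greatest he hek h
      have hmaxα : ∀ e, l < e → e ≤ k → ¬ ∃ E ∈ 𝓕, E.card = τ.m e ∧ α ∈ E := by
        rintro e he hek ⟨E, hE, hEcard, hαE⟩
        exact hmaxβ e he hek (exists_rank hCS hE hEcard hβ le_rfl)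
      have hcαk : csClos τ 𝓕 X k α = ↑(Fm.filter (fun x => x ≤ α)) :=
        closure_eq_of_max hCS hFm hFmcard hαFm hlk hmaxα
      have hcαk1 : csClos τ 𝓕 X (k - 1) α = ↑(Fm.filter (fun x => x ≤ α)) :=
        closure_eq_of_max hCS hFm hFmcard hαFm (by omega)
          (fun e he hek => hmaxα e he (by omega))
      have hcβk : csClos τ 𝓕 X k β = ↑(Fm.filter (fun x => x ≤ β)) :=
        closure_eq_of_max hCS hFm hFmcard hβFm hlk hmaxβ
      have hcβk1 : csClos τ 𝓕 X (k - 1) β = ↑(Fm.filter (fun x => x ≤ β)) :=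
        closure_eq_of_max hCS hFm hFmcard hβFm (by omega)
          (fun e he hek => hmaxβ e he (by omega))
      have hsub : Fm.filter (fun x => x ≤ α) ⊆ Fm.filter (fun x => x ≤ β) := by
        intro x hx
        obtain ⟨h1, h2⟩ := Finset.mem_filter.mp hx
        exact Finset.mem_filter.mpr ⟨h1, h2.trans hlt.le⟩
      by_cases hr : (Fm.filter (fun x => x ≤ α)).card ≤ τ.r k
      · left
        unfold csXi
        rw [if_neg (by omega : ¬ k = 0), hcαk, Set.ncard_coe_finset, if_pos hr]
      · have hrβ : ¬ (Fm.filter (fun x => x ≤ β)).card ≤ τ.r k :=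
          fun h => hr (le_trans (Finset.card_le_card hsub) h)
        right
        have e1 : csXi τ 𝓕 X α k = 0 := by
          unfold csXi
          rw [if_neg (by omega : ¬ k = 0), hcαk, hcαk1]
          simp only [Set.ncard_coe_finset]
          rw [if_neg hr]
          simp
        have e2 : csXi τ 𝓕 X β k = 0 := by
          unfold csXi
          rw [if_neg (by omega : ¬ k = 0), hcβk, hcβk1]
          simp only [Set.ncard_coe_finset]
          rw [if_neg hrβ]
          simp
        rw [e1, e2]
end
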